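/- Let n ≥ 1, let T = (T_{ij})_{i,j=1}^n be an n×n operator matrix with entries T_{ij} bounded linear operators on H, acting on the n-fold direct sum H^n, and let t ∈ [0,1]. Then ‖T‖_{t-ber} ≤ ‖T'‖, where T' is the n×n real matrix with entries t_{ii} = ‖T_{ii}‖_{t-ber} and t_{ij} = t‖T_{ij}‖_ber + (1−t)‖T_{ji}‖_ber for i ≠ j, and ‖T'‖ is its operator norm on n-dimensional Euclidean space; the t-Berezin norm of T is taken with respect to the family of unit vectors of H^n of the form (c₁ k_{λ₁}, …, c_n k_{λ_n}) with λ₁, …, λ_n ∈ Ω and complex scalars with |c₁|² + ⋯ + |c_n|² = 1. -/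

import Mathlib

open ContinuousLinearMap
open scoped InnerProductSpace

/-- The `t`-Berezin norm of `A` with respect to the family `k` of (normalized reproducing
kernel) vectors. -/
noncomputable def tber {E : Type*} [NormedAddCommGroup E] [InnerProductSpace ℂ E]
    [CompleteSpace E] {ι : Type*} (k : ι → E) (t : ℝ) (A : E →L[ℂ] E) : ℝ :=
  ⨆ p : ι × ι, (t * ‖⟪A (k p.1), k p.2⟫_ℂ‖ + (1 - t) * ‖⟪adjoint A (k p.1), k p.2⟫_ℂ‖)

/-- The Berezin norm of `A` with respect to the family `k`. -/
noncomputable def berNorm {E : Type*} [NormedAddCommGroup E] [InnerProductSpace ℂ E]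
    {ι : Type*} (k : ι → E) (A : E →L[ℂ] E) : ℝ :=
  ⨆ p : ι × ι, ‖⟪A (k p.1), k p.2⟫_ℂ‖

/-- The Berezin number of `A` with respect to the family `k`. -/
noncomputable def berNum {E : Type*} [NormedAddCommGroup E] [InnerProductSpace ℂ E]
    {ι : Type*} (k : ι → E) (A : E →L[ℂ] E) : ℝ :=
  ⨆ l : ι, ‖⟪A (k l), k l⟫_ℂ‖

/-- The modulus `|A| = (A*A)^(1/2)` of an operator, via the continuous functional calculus. -/
noncomputable def absOp {H : Type*} [NormedAddCommGroup H] [InnerProductSpace ℂ H]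
    [CompleteSpace H] (A : H →L[ℂ] H) : H →L[ℂ] H :=
  cfc Real.sqrt (adjoint A * A)

/-- Real powers of a (positive) operator via the continuous functional calculus. -/
noncomputable def rpowOp {H : Type*} [NormedAddCommGroup H] [InnerProductSpace ℂ H]
    [CompleteSpace H] (A : H →L[ℂ] H) (r : ℝ) : H →L[ℂ] H :=
  cfc (fun x : ℝ => x ^ r) A


/-- `PiLp` is complete when each factor is (its uniformity is the product uniformity). -/
instance piLp_completeSpace {ι : Type*} (p : ENNReal) (β : ι → Type*)
    [∀ i, UniformSpace (β i)] [∀ i, CompleteSpace (β i)] : CompleteSpace (PiLp p β) :=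
  (PiLp.uniformEquiv p β).completeSpace_iff.2 inferInstance

/-- The family of unit vectors `(c₁ k_{λ₁}, …, c_n k_{λ_n})` of `H^n` (realized as
`PiLp 2 (fun _ : Fin n => H)`) indexed by tuples of kernel indices and scalars with
`∑ i |c_i|² = 1`. -/
noncomputable def Kn {H : Type*} [NormedAddCommGroup H] [InnerProductSpace ℂ H]
    {Ω : Type*} (k : Ω → H) (n : ℕ) :
    {q : (Fin n → Ω) × (Fin n → ℂ) // ∑ i, ‖q.2 i‖ ^ 2 = 1} → PiLp 2 (fun _ : Fin n => H) :=
  fun q => (WithLp.equiv 2 (∀ _ : Fin n, H)).symm (fun i => q.1.2 i • k (q.1.1 i))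


private lemma inner_op_le_opNorm' {E : Type*} [NormedAddCommGroup E] [InnerProductSpace ℂ E]
    (A : E →L[ℂ] E) {u v : E} (hu : ‖u‖ = 1) (hv : ‖v‖ = 1) :
    ‖⟪A u, v⟫_ℂ‖ ≤ ‖A‖ :=
  calc ‖⟪A u, v⟫_ℂ‖ ≤ ‖A u‖ * ‖v‖ := norm_inner_le_norm _ _
    _ ≤ (‖A‖ * ‖u‖) * ‖v‖ := mul_le_mul_of_nonneg_right (A.le_opNorm u) (norm_nonneg v)
    _ = ‖A‖ := by rw [hu, hv, mul_one, mul_one]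

private lemma le_berNorm' {E : Type*} [NormedAddCommGroup E] [InnerProductSpace ℂ E]
    {Ω : Type*} {k : Ω → E} (hk : ∀ l, ‖k l‖ = 1) (A : E →L[ℂ] E) (l m : Ω) :
    ‖⟪A (k l), k m⟫_ℂ‖ ≤ berNorm k A :=
  le_ciSup (f := fun p : Ω × Ω => ‖⟪A (k p.1), k p.2⟫_ℂ‖)
    ⟨‖A‖, by rintro r ⟨p, rfl⟩; exact inner_op_le_opNorm' A (hk _) (hk _)⟩ (l, m)

private lemma le_tber' {E : Type*} [NormedAddCommGroup E] [InnerProductSpace ℂ E]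
    [CompleteSpace E] {Ω : Type*} {k : Ω → E} (hk : ∀ l, ‖k l‖ = 1) {t : ℝ}
    (ht : t ∈ Set.Icc (0 : ℝ) 1) (A : E →L[ℂ] E) (l m : Ω) :
    t * ‖⟪A (k l), k m⟫_ℂ‖ + (1 - t) * ‖⟪adjoint A (k l), k m⟫_ℂ‖ ≤ tber k t A :=
  le_ciSup (f := fun p : Ω × Ω =>
      t * ‖⟪A (k p.1), k p.2⟫_ℂ‖ + (1 - t) * ‖⟪adjoint A (k p.1), k p.2⟫_ℂ‖)
    ⟨t * ‖A‖ + (1 - t) * ‖adjoint A‖, by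
      rintro r ⟨p, rfl⟩
      exact add_le_add
        (mul_le_mul_of_nonneg_left (inner_op_le_opNorm' A (hk _) (hk _)) ht.1)
        (mul_le_mul_of_nonneg_left (inner_op_le_opNorm' (adjoint A) (hk _) (hk _))
          (by linarith [ht.2]))⟩ (l, m)

set_option synthInstance.maxHeartbeats 1000000 in
theorem stmt12 {H : Type*} [NormedAddCommGroup H] [InnerProductSpace ℂ H] [CompleteSpace H]
    {Ω : Type*} [Nonempty Ω] (k : Ω → H) (hk : ∀ l, ‖k l‖ = 1)
    (n : ℕ) (hn : 1 ≤ n) (t : ℝ) (ht : t ∈ Set.Icc (0 : ℝ) 1)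
    (M : Fin n → Fin n → (H →L[ℂ] H))
    (T : PiLp 2 (fun _ : Fin n => H) →L[ℂ] PiLp 2 (fun _ : Fin n => H))
    (hT : ∀ v : PiLp 2 (fun _ : Fin n => H), ∀ i : Fin n,
      WithLp.equiv 2 (∀ _ : Fin n, H) (T v) i =
        ∑ j, M i j (WithLp.equiv 2 (∀ _ : Fin n, H) v j)) :
    tber (Kn k n) t T ≤
      ‖Matrix.toEuclideanCLM (𝕜 := ℝ) (Matrix.of fun i j =>
        if i = j then tber k t (M i i)
        else t * berNorm k (M i j) + (1 - t) * berNorm k (M j i))‖ := by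
  classical
  set N : Matrix (Fin n) (Fin n) ℝ := Matrix.of fun i j =>
    if i = j then tber k t (M i i)
    else t * berNorm k (M i j) + (1 - t) * berNorm k (M j i) with hNdef
  have ht0 : (0 : ℝ) ≤ t := ht.1
  have ht1 : (0 : ℝ) ≤ 1 - t := by linarith [ht.2]
  refine Real.iSup_le (fun p => ?_) (norm_nonneg _)
  obtain ⟨⟨⟨lam, c⟩, hc⟩, ⟨⟨mu, d⟩, hd⟩⟩ := p
  set x : PiLp 2 (fun _ : Fin n => H) := Kn k n ⟨(lam, c), hc⟩ with hxdef
  set y : PiLp 2 (fun _ : Fin n => H) := Kn k n ⟨(mu, d), hd⟩ with hydef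
  have hx : ∀ j, x j = c j • k (lam j) := fun j => rfl
  have hy : ∀ i, y i = d i • k (mu i) := fun i => rfl
  have hTx : ∀ i, (T x) i = ∑ j, M i j (c j • k (lam j)) := fun i => hT x i
  have hTy : ∀ i, (T y) i = ∑ j, M i j (d j • k (mu j)) := fun i => hT y i
  have h1 : ⟪T x, y⟫_ℂ = ∑ i, ∑ j,
      (starRingEnd ℂ) (c j) * d i * ⟪(M i j) (k (lam j)), k (mu i)⟫_ℂ := by
    rw [PiLp.inner_apply]
    refine Finset.sum_congr rfl fun i _ => ?_
    rw [hTx i, hy i, sum_inner]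
    refine Finset.sum_congr rfl fun j _ => ?_
    rw [map_smul, inner_smul_left, inner_smul_right]
    ring
  have h2 : ⟪adjoint T x, y⟫_ℂ = ∑ i, ∑ j,
      (starRingEnd ℂ) (c i) * d j * ⟪adjoint (M i j) (k (lam i)), k (mu j)⟫_ℂ := by
    rw [adjoint_inner_left, PiLp.inner_apply]
    refine Finset.sum_congr rfl fun i _ => ?_
    rw [hTy i, hx i, inner_sum]
    refine Finset.sum_congr rfl fun j _ => ?_
    rw [map_smul, inner_smul_left, inner_smul_right, adjoint_inner_left]
    ring
  have hb1 : ‖⟪T x, y⟫_ℂ‖ ≤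
      ∑ i, ∑ j, ‖c j‖ * ‖d i‖ * ‖⟪(M i j) (k (lam j)), k (mu i)⟫_ℂ‖ := by
    rw [h1]
    refine (norm_sum_le _ _).trans (Finset.sum_le_sum fun i _ => ?_)
    refine (norm_sum_le _ _).trans (Finset.sum_le_sum fun j _ => ?_)
    simp [norm_mul, mul_assoc]
  have hb2 : ‖⟪adjoint T x, y⟫_ℂ‖ ≤
      ∑ i, ∑ j, ‖c j‖ * ‖d i‖ * ‖⟪adjoint (M j i) (k (lam j)), k (mu i)⟫_ℂ‖ := by
    rw [h2, Finset.sum_comm]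
    refine (norm_sum_le _ _).trans (Finset.sum_le_sum fun i _ => ?_)
    refine (norm_sum_le _ _).trans (Finset.sum_le_sum fun j _ => ?_)
    simp [norm_mul, mul_assoc]
  set u : EuclideanSpace ℝ (Fin n) := (WithLp.equiv 2 _).symm (fun j => ‖c j‖) with hudef
  set v : EuclideanSpace ℝ (Fin n) := (WithLp.equiv 2 _).symm (fun i => ‖d i‖) with hvdef
  have hnu : ‖u‖ = 1 := by
    rw [EuclideanSpace.norm_eq]
    simp only [hudef, WithLp.equiv_symm_apply, PiLp.toLp_apply, norm_norm]
    rw [hc, Real.sqrt_one]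
  have hnv : ‖v‖ = 1 := by
    rw [EuclideanSpace.norm_eq]
    simp only [hvdef, WithLp.equiv_symm_apply, PiLp.toLp_apply, norm_norm]
    rw [hd, Real.sqrt_one]
  calc t * ‖⟪T x, y⟫_ℂ‖ + (1 - t) * ‖⟪adjoint T x, y⟫_ℂ‖
      ≤ ∑ i, ∑ j, ‖c j‖ * ‖d i‖ *
          (t * ‖⟪(M i j) (k (lam j)), k (mu i)⟫_ℂ‖ +
           (1 - t) * ‖⟪adjoint (M j i) (k (lam j)), k (mu i)⟫_ℂ‖) := by
        refine (add_le_add (mul_le_mul_of_nonneg_left hb1 ht0)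
          (mul_le_mul_of_nonneg_left hb2 ht1)).trans_eq ?_
        rw [Finset.mul_sum, Finset.mul_sum, ← Finset.sum_add_distrib]
        refine Finset.sum_congr rfl fun i _ => ?_
        rw [Finset.mul_sum, Finset.mul_sum, ← Finset.sum_add_distrib]
        exact Finset.sum_congr rfl fun j _ => by ring
    _ ≤ ∑ i, ∑ j, ‖c j‖ * ‖d i‖ * N i j := by
        refine Finset.sum_le_sum fun i _ => Finset.sum_le_sum fun j _ => ?_
        refine mul_le_mul_of_nonneg_left ?_ (by positivity)
        by_cases hij : i = j
        · subst hij
          simp only [hNdef, Matrix.of_apply, if_pos rfl]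
          exact le_tber' hk ht (M i i) (lam i) (mu i)
        · simp only [hNdef, Matrix.of_apply, if_neg hij]
          refine add_le_add (mul_le_mul_of_nonneg_left (le_berNorm' hk _ _ _) ht0)
            (mul_le_mul_of_nonneg_left ?_ ht1)
          have he : ⟪adjoint (M j i) (k (lam j)), k (mu i)⟫_ℂ =
              (starRingEnd ℂ) ⟪(M j i) (k (mu i)), k (lam j)⟫_ℂ := by
            rw [adjoint_inner_left, ← inner_conj_symm]
          rw [he, RCLike.norm_conj]
          exact le_berNorm' hk _ _ _
    _ = ⟪(Matrix.toEuclideanCLM (𝕜 := ℝ) N) u, v⟫_ℝ := by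
        rw [hudef, WithLp.equiv_symm_apply, Matrix.toEuclideanCLM_toLp]
        simp only [PiLp.inner_apply, RCLike.inner_apply, starRingEnd_apply, star_trivial,
          WithLp.equiv_symm_apply, PiLp.toLp_apply, Matrix.toLin'_apply, Matrix.mulVec, dotProduct,
          hvdef]
        simp_rw [Finset.mul_sum]
        exact Finset.sum_congr rfl fun i _ => Finset.sum_congr rfl fun j _ => by ring
    _ ≤ ‖(Matrix.toEuclideanCLM (𝕜 := ℝ) N) u‖ * ‖v‖ := real_inner_le_norm _ _
    _ ≤ (‖Matrix.toEuclideanCLM (𝕜 := ℝ) N‖ * ‖u‖) * ‖v‖ :=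
        mul_le_mul_of_nonneg_right (ContinuousLinearMap.le_opNorm _ _) (norm_nonneg _)
    _ = ‖Matrix.toEuclideanCLM (𝕜 := ℝ) N‖ := by rw [hnu, hnv, mul_one, mul_one]
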